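/- (Cheeger–Simons exact sequence) For a smooth manifold M there is a short exact sequence of abelian groups 0 → H^1(M, ℝ/ℤ) → H^2(DC_2^•(M)) → Ω^2_{ℤ,cl}(M) → 0, where the right map sends the class of (c, h, ω) to ω and Ω^2_{ℤ,cl}(M) is the group of closed 2-forms with integral periods. -/

import Mathlib

open Manifold Finset
noncomputable section

/-- The `i`-th face embedding of the standard `n`-simplex into the standard `n+1`-simplex,
as a linear map (insertion of `0` at the `i`-th vertex coordinate). -/
def faceLM (n : ℕ) (i : Fin (n + 2)) : (Fin (n + 1) → ℝ) →ₗ[ℝ] (Fin (n + 2) → ℝ) where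
  toFun x j := ∑ k, if i.succAbove k = j then x k else 0
  map_add' x y := by
    funext j
    show (∑ k, if i.succAbove k = j then (x k + y k) else 0) =
      (∑ k, if i.succAbove k = j then x k else 0) + (∑ k, if i.succAbove k = j then y k else 0)
    rw [← Finset.sum_add_distrib]
    exact Finset.sum_congr rfl fun k _ => by split <;> simp
  map_smul' c x := by
    funext j
    show (∑ k, if i.succAbove k = j then (c * x k) else 0) =
      c * ∑ k, if i.succAbove k = j then x k else 0
    rw [Finset.mul_sum]
    exact Finset.sum_congr rfl fun k _ => by split <;> simp

lemma faceLM_apply (n : ℕ) (i : Fin (n + 2)) (x : Fin (n + 1) → ℝ) (j : Fin (n + 2)) :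
    faceLM n i x j = ∑ k, if i.succAbove k = j then x k else 0 := rfl

lemma faceLM_mapsTo (n : ℕ) (i : Fin (n + 2)) :
    Set.MapsTo (faceLM n i) (stdSimplex ℝ (Fin (n + 1))) (stdSimplex ℝ (Fin (n + 2))) := by
  intro x hx
  obtain ⟨hx0, hx1⟩ := hx
  constructor
  · intro j
    rw [faceLM_apply]
    refine Finset.sum_nonneg fun k _ => ?_
    split
    · exact hx0 k
    · exact le_refl 0
  · calc ∑ j, faceLM n i x j
        = ∑ j, ∑ k, (if i.succAbove k = j then x k else 0) :=
          Finset.sum_congr rfl fun j _ => faceLM_apply n i x j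
      _ = ∑ k, ∑ j, (if i.succAbove k = j then x k else 0) := Finset.sum_comm
      _ = ∑ k, x k := Finset.sum_congr rfl fun k _ => by simp [Finset.sum_ite_eq]
      _ = 1 := hx1

variable {E : Type} [NormedAddCommGroup E] [NormedSpace ℝ E]
  {H : Type} [TopologicalSpace H] (I : ModelWithCorners ℝ E H)
  (M : Type) [TopologicalSpace M] [ChartedSpace H M]

/-- A smooth singular `n`-simplex in a manifold `M`. -/
structure SSimplex (n : ℕ) where
  toFun : (Fin (n + 1) → ℝ) → M
  smooth : ContMDiffOn 𝓘(ℝ, Fin (n + 1) → ℝ) I (⊤ : ℕ∞) toFun (stdSimplex ℝ (Fin (n + 1)))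

variable {I M}

/-- The `i`-th face of a smooth singular simplex. -/
def SSimplex.face {n : ℕ} (σ : SSimplex I M (n + 1)) (i : Fin (n + 2)) : SSimplex I M n where
  toFun := σ.toFun ∘ (faceLM n i)
  smooth := by
    have h1 : ContMDiff 𝓘(ℝ, Fin (n+1) → ℝ) 𝓘(ℝ, Fin (n+2) → ℝ) (⊤ : ℕ∞) ⇑(faceLM n i) := by
      rw [← LinearMap.coe_toContinuousLinearMap' (faceLM n i)]
      exact (ContinuousLinearMap.contDiff _).contMDiff
    exact σ.smooth.comp h1.contMDiffOn (faceLM_mapsTo n i)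

variable (I M)

/-- Smooth singular chains. -/
def SChain (n : ℕ) : Type := FreeAbelianGroup (SSimplex I M n)

instance (n : ℕ) : AddCommGroup (SChain I M n) :=
  inferInstanceAs (AddCommGroup (FreeAbelianGroup (SSimplex I M n)))

/-- The boundary operator on smooth singular chains. -/
def sbd (n : ℕ) : SChain I M (n + 1) →+ SChain I M n :=
  ∑ i : Fin (n + 2), (-1 : ℤ) ^ (i : ℕ) • FreeAbelianGroup.map (fun σ => σ.face i)

variable (R : Type) [AddCommGroup R]

/-- Smooth singular cochains with coefficients in `R`. -/
def SCochain (n : ℕ) : Type := SSimplex I M n → R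

instance (n : ℕ) : AddCommGroup (SCochain I M R n) :=
  inferInstanceAs (AddCommGroup (SSimplex I M n → R))

/-- The coboundary on smooth singular cochains. -/
def scd (n : ℕ) : SCochain I M R n →+ SCochain I M R (n + 1) :=
  AddMonoidHom.mk' (fun c σ => ∑ i : Fin (n + 2), (-1 : ℤ) ^ (i : ℕ) • c (σ.face i))
    (by
      intro c c'
      funext σ
      show ∑ i : Fin (n + 2), (-1 : ℤ) ^ (i : ℕ) • (c (σ.face i) + c' (σ.face i)) =
        (∑ i : Fin (n + 2), (-1 : ℤ) ^ (i : ℕ) • c (σ.face i)) +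
          ∑ i : Fin (n + 2), (-1 : ℤ) ^ (i : ℕ) • c' (σ.face i)
      simp [smul_add, Finset.sum_add_distrib])

/-- Pairing of a cochain with a chain (evaluation / integration). -/
def pairC {n : ℕ} (c : SCochain I M R n) : SChain I M n →+ R :=
  FreeAbelianGroup.lift c

lemma pairC_add {n : ℕ} (c c' : SCochain I M R n) (x : SChain I M n) :
    pairC I M R (c + c') x = pairC I M R c x + pairC I M R c' x := by
  have key : ∀ (f g : SSimplex I M n → R) (y : FreeAbelianGroup (SSimplex I M n)),
      FreeAbelianGroup.lift (f + g) y = FreeAbelianGroup.lift f y + FreeAbelianGroup.lift g y := by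
    intro f g y
    induction y using FreeAbelianGroup.induction_on with
    | zero => simp
    | of σ => simp only [FreeAbelianGroup.lift_apply_of, Pi.add_apply]
    | neg σ h => simp only [map_neg, h]; abel
    | add y z hy hz => simp only [map_add, hy, hz]; abel
  exact key c c' x

/-- The coefficient map `ℤ → ℝ` on cochains. -/
def intToReal (n : ℕ) : SCochain I M ℤ n →+ SCochain I M ℝ n :=
  AddMonoidHom.mk' (fun c σ => ((c σ : ℤ) : ℝ))
    (by
      intro c c'
      funext σ
      show ((c σ + c' σ : ℤ) : ℝ) = ((c σ : ℤ) : ℝ) + ((c' σ : ℤ) : ℝ)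
      push_cast
      ring)

/-- Degree `n-1` part (with the convention that it is trivial for `n = 0`):
this hosts the middle ("real cochain") component of the Hopkins–Singer complex. -/
def hCompT : ℕ → Type
  | 0 => PUnit
  | (m + 1) => SCochain I M ℝ m

instance : ∀ n, AddCommGroup (hCompT I M n)
  | 0 => inferInstanceAs (AddCommGroup PUnit)
  | (m + 1) => inferInstanceAs (AddCommGroup (SCochain I M ℝ m))

/-- Differential from the `(n-1)`-st level into degree `n`. -/
def hd : ∀ n, hCompT I M n →+ SCochain I M ℝ n
  | 0 => 0
  | (m + 1) => scd I M ℝ m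

variable (Ω : ∀ n : ℕ, AddSubgroup (SCochain I M ℝ n))

/-- The Hopkins–Singer group `DC_s^n(M)`: triples `(c, h, ω)` of an integral `n`-cochain,
a real `(n-1)`-cochain and a differential form `ω` (an element of the de Rham subcomplex
`Ω ⊆ C^•_ℝ`, forms being viewed as real cochains by integration), where `ω = 0` if `n < s`. -/
def DCgrp (s n : ℕ) :
    AddSubgroup (SCochain I M ℤ n × hCompT I M n × SCochain I M ℝ n) where
  carrier := {x | x.2.2 ∈ Ω n ∧ (n < s → x.2.2 = 0)}
  zero_mem' := ⟨(Ω n).zero_mem, fun _ => rfl⟩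
  add_mem' := by
    rintro a b ⟨ha, ha'⟩ ⟨hb, hb'⟩
    exact ⟨(Ω n).add_mem ha hb, fun h => by
      show a.2.2 + b.2.2 = 0
      rw [ha' h, hb' h, add_zero]⟩
  neg_mem' := by
    rintro a ⟨ha, ha'⟩
    refine ⟨(Ω n).neg_mem ha, fun h => ?_⟩
    show -a.2.2 = 0
    rw [ha' h, neg_zero]

/-- The Hopkins–Singer differential `d(c,h,ω) = (dc, ω - c - dh, dω)`. -/
def dDC (hΩ : ∀ n x, x ∈ Ω n → scd I M ℝ n x ∈ Ω (n + 1)) (s n : ℕ) :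
    (DCgrp I M Ω s n) →+ (DCgrp I M Ω s (n + 1)) :=
  AddMonoidHom.mk'
    (fun x => ⟨(scd I M ℤ n x.1.1,
        x.1.2.2 - intToReal I M n x.1.1 - hd I M n x.1.2.1,
        scd I M ℝ n x.1.2.2),
      ⟨hΩ n _ x.2.1, fun h => by
        rw [x.2.2 (Nat.lt_of_succ_lt h)]; exact map_zero _⟩⟩)
    (by
      intro x y
      apply Subtype.ext
      simp only [AddSubgroup.coe_add, Prod.fst_add, Prod.snd_add, map_add, Prod.mk_add_mk,
        Prod.mk.injEq]
      refine ⟨trivial, Prod.ext ?_ ?_⟩ <;> (try simp only [Prod.fst_add, Prod.snd_add]) <;> abel)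

/-- Cohomology at the middle spot of a two-step complex `A → B → C`. -/
def Hq {A B C : Type*} [AddCommGroup A] [AddCommGroup B] [AddCommGroup C]
    (f : A →+ B) (g : B →+ C) : Type _ :=
  g.ker ⧸ ((f.range).addSubgroupOf g.ker)

instance {A B C : Type*} [AddCommGroup A] [AddCommGroup B] [AddCommGroup C]
    (f : A →+ B) (g : B →+ C) : AddCommGroup (Hq f g) :=
  inferInstanceAs (AddCommGroup (_ ⧸ _))

/-- Class of a cocycle in `Hq`. -/
def HqMk {A B C : Type*} [AddCommGroup A] [AddCommGroup B] [AddCommGroup C]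
    (f : A →+ B) (g : B →+ C) (b : B) (hb : b ∈ g.ker) : Hq f g :=
  QuotientAddGroup.mk (⟨b, hb⟩ : g.ker)

/-- Cycles (with the convention `Z_0 = C_0`, everything). -/
def Zcyc : ∀ n : ℕ, AddSubgroup (SChain I M n)
  | 0 => ⊤
  | (m + 1) => (sbd I M m).ker


section Stmt15

variable {E : Type} [NormedAddCommGroup E] [NormedSpace ℝ E]
  {H : Type} [TopologicalSpace H] (I : ModelWithCorners ℝ E H)
  (M : Type) [TopologicalSpace M] [ChartedSpace H M]

lemma pairC_zero' {n : ℕ} (x : SChain I M n) : pairC I M ℝ (0 : SCochain I M ℝ n) x = 0 := by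
  have key : ∀ (y : FreeAbelianGroup (SSimplex I M n)),
      FreeAbelianGroup.lift (0 : SSimplex I M n → ℝ) y = 0 := by
    intro y
    induction y using FreeAbelianGroup.induction_on with
    | zero => simp
    | of σ => simp only [FreeAbelianGroup.lift_apply_of, Pi.zero_apply]
    | neg σ h => simp only [map_neg, h, neg_zero]
    | add y z hy hz => simp only [map_add, hy, hz, add_zero]
  exact key x

lemma pairC_neg' {n : ℕ} (c : SCochain I M ℝ n) (x : SChain I M n) :
    pairC I M ℝ (-c) x = - pairC I M ℝ c x := by
  have := pairC_add I M ℝ (-c) c x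
  rw [neg_add_cancel, pairC_zero'] at this
  linarith

variable (Ω : ∀ n : ℕ, AddSubgroup (SCochain I M ℝ n))

/-- The group `Ω^2_{ℤ,cl}(M)` of closed `2`-forms with integral periods (forms are encoded as
elements of the de Rham subcomplex `Ω` of real smooth singular cochains; a form has integral
periods iff its pairing with every smooth singular `2`-cycle is an integer). -/
def OmegaZcl : AddSubgroup (SCochain I M ℝ 2) where
  carrier := {ω | ω ∈ Ω 2 ∧ scd I M ℝ 2 ω = 0 ∧
    ∀ S : SChain I M 2, sbd I M 1 S = 0 → ∃ z : ℤ, pairC I M ℝ ω S = z}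
  zero_mem' := ⟨(Ω 2).zero_mem, map_zero _, fun S _ => ⟨0, by rw [pairC_zero']; norm_num⟩⟩
  add_mem' := by
    rintro a b ⟨ha, ha', ha''⟩ ⟨hb, hb', hb''⟩
    refine ⟨(Ω 2).add_mem ha hb, by rw [map_add, ha', hb', add_zero], fun S hS => ?_⟩
    obtain ⟨z, hz⟩ := ha'' S hS
    obtain ⟨w, hw⟩ := hb'' S hS
    exact ⟨z + w, by rw [pairC_add, hz, hw]; push_cast; ring⟩
  neg_mem' := by
    rintro a ⟨ha, ha', ha''⟩
    refine ⟨(Ω 2).neg_mem ha, by rw [map_neg, ha', neg_zero], fun S hS => ?_⟩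
    obtain ⟨z, hz⟩ := ha'' S hS
    exact ⟨-z, by rw [pairC_neg', hz]; push_cast; ring⟩

/-!
A degree-2 cocycle `(c, h, ω)` of `DC_2` satisfies `ω = c + dh`, so `ω` is closed with integral
periods; this is `η`. A class killed by `η` is represented by a flat cocycle `(c, h, 0)`: then
`dh = -c` is integral, so `h mod ℤ` is an `ℝ/ℤ`-cocycle, and the flat cocycle is a coboundary
exactly when `h mod ℤ` is one, which makes `ι` well defined and injective with image `ker η`.
For surjectivity, the periods of an integral `ω` vanish mod `ℤ`; as `ℝ/ℤ` is divisible, hence an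
injective `ℤ`-module, `ω mod ℤ = dk`, and lifting `k` to a real cochain `h` makes `ω - dh` integral.
-/

section SimplicialIdentities

variable {I M}

lemma faceLM_faceLM_apply {n : ℕ} (a : Fin (n + 3)) (b : Fin (n + 2)) (x : Fin (n + 1) → ℝ)
    (l : Fin (n + 3)) :
    faceLM (n + 1) a (faceLM n b x) l =
      ∑ m, if a.succAbove (b.succAbove m) = l then x m else 0 := by
  have hk (k : Fin (n + 2)) : (if a.succAbove k = l then faceLM n b x k else 0) =
      ∑ m, if b.succAbove m = k then (if a.succAbove k = l then x m else 0) else 0 := by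
    split_ifs <;> simp [*, faceLM_apply]
  rw [faceLM_apply, Finset.sum_congr rfl fun k _ => hk k, Finset.sum_comm]
  simp

lemma SSimplex.face_face {n : ℕ} (σ : SSimplex I M (n + 2)) {i j : Fin (n + 2)} (h : i ≤ j) :
    (σ.face i.castSucc).face j = (σ.face j.succ).face i := by
  have hδ (m : Fin (n + 1)) :
      i.castSucc.succAbove (j.succAbove m) = j.succ.succAbove (i.succAbove m) :=
    (congrArg (fun f => f.toOrderHom m) (SimplexCategory.δ_comp_δ h)).symm
  simp only [SSimplex.face, SSimplex.mk.injEq]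
  ext x
  simp only [Function.comp_apply]
  congr 1
  ext l
  simp only [faceLM_faceLM_apply, hδ]

-- Pairs off the terms `(σ.face a).face b` of `d ∘ d` that cancel by the simplicial identity.
def facePairSwap {n : ℕ} (p : Fin (n + 3) × Fin (n + 2)) : Fin (n + 3) × Fin (n + 2) :=
  if h : (p.1 : ℕ) ≤ p.2 then (p.2.succ, ⟨p.1, by omega⟩)
  else (p.2.castSucc, ⟨p.1 - 1, by omega⟩)

lemma facePairSwap_involutive {n : ℕ} : Function.Involutive (facePairSwap (n := n)) := by
  intro p
  by_cases h : (p.1 : ℕ) ≤ p.2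
  · have h' : ¬ ((p.2 : ℕ) + 1 ≤ p.1) := by omega
    simp [facePairSwap, h, h']
  · have h' : (p.2 : ℕ) ≤ p.1 - 1 := by omega
    simp only [facePairSwap, h, ↓reduceDIte, Fin.val_castSucc, h', Fin.succ_mk, Fin.eta,
      Prod.ext_iff, Fin.ext_iff, and_true]
    omega

lemma facePairSwap_ne {n : ℕ} (p : Fin (n + 3) × Fin (n + 2)) : facePairSwap p ≠ p := by
  intro heq
  have hfst := congrArg (fun q => (q.1 : ℕ)) heq
  unfold facePairSwap at hfst
  split_ifs at hfst <;> simp only [Fin.val_succ, Fin.val_castSucc] at hfst <;> omega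

lemma neg_one_pow_facePairSwap {n : ℕ} (p : Fin (n + 3) × Fin (n + 2)) :
    (-1 : ℤ) ^ ((facePairSwap p).1 + (facePairSwap p).2 : ℕ) = -(-1) ^ (p.1 + p.2 : ℕ) := by
  unfold facePairSwap
  split_ifs with h
  · rw [Fin.val_succ, show (p.2 : ℕ) + 1 + p.1 = p.1 + p.2 + 1 by omega, pow_succ, mul_neg_one]
  · rw [Fin.val_castSucc, show (p.1 : ℕ) + p.2 = p.2 + (p.1 - 1) + 1 by omega, pow_succ,
      mul_neg_one, neg_neg]

lemma SSimplex.face_face_facePairSwap {n : ℕ} (σ : SSimplex I M (n + 2))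
    (p : Fin (n + 3) × Fin (n + 2)) :
    (σ.face (facePairSwap p).1).face (facePairSwap p).2 = (σ.face p.1).face p.2 := by
  unfold facePairSwap
  split_ifs with h
  · exact (σ.face_face (i := ⟨p.1, by omega⟩) h).symm
  · rw [σ.face_face (j := ⟨p.1 - 1, by omega⟩) (by rw [Fin.le_def]; dsimp only; omega)]
    congr
    ext
    simp only [Fin.val_succ]
    omega

lemma scd_apply {R : Type} [AddCommGroup R] {n : ℕ} (c : SCochain I M R n)
    (σ : SSimplex I M (n + 1)) :
    scd I M R n c σ = ∑ i : Fin (n + 2), (-1 : ℤ) ^ (i : ℕ) • c (σ.face i) := rfl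

lemma scd_scd {R : Type} [AddCommGroup R] {n : ℕ} (c : SCochain I M R n) :
    scd I M R (n + 1) (scd I M R n c) = 0 := by
  funext σ
  simp only [scd_apply, Finset.smul_sum, smul_smul, ← pow_add, ← Finset.sum_product',
    Finset.univ_product_univ]
  refine Finset.sum_involution (fun p _ => facePairSwap p) (fun p _ => ?_)
    (fun p _ _ => facePairSwap_ne p) (fun _ _ => Finset.mem_univ _)
    (fun p _ => facePairSwap_involutive p)
  rw [σ.face_face_facePairSwap, neg_one_pow_facePairSwap, neg_smul, add_neg_cancel]

end SimplicialIdentities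

lemma AddMonoidHom.exists_comp_eq_of_ker_le {A B Q : Type*} [AddCommGroup A] [AddCommGroup B]
    [AddCommGroup Q] [DivisibleBy Q ℤ] (f : A →+ B) (ψ : A →+ Q) (h : f.ker ≤ ψ.ker) :
    ∃ k : B →+ Q, k.comp f = ψ := by
  let ψ' : f.range →+ Q := f.rangeRestrict.liftOfRightInverse _
    (Function.rightInverse_surjInv f.rangeRestrict_surjective) ⟨ψ, f.ker_rangeRestrict ▸ h⟩
  obtain ⟨k, hk⟩ := (Module.Baer.of_divisible Q).extension_property_addMonoidHom
    f.range.subtype Subtype.val_injective ψ'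
  refine ⟨k, AddMonoidHom.ext fun a => ?_⟩
  exact (DFunLike.congr_fun hk (f.rangeRestrict a)).trans
    (f.rangeRestrict.liftOfRightInverse_comp_apply _ _ _ a)

section Coefficients

variable {I M} {A B C : Type} [AddCommGroup A] [AddCommGroup B] [AddCommGroup C]

def SCochain.map (f : A →+ B) (n : ℕ) : SCochain I M A n →+ SCochain I M B n where
  toFun c σ := f (c σ)
  map_zero' := funext fun _ => map_zero f
  map_add' c c' := funext fun σ => map_add f (c σ) (c' σ)

lemma SCochain.map_apply (f : A →+ B) {n : ℕ} (c : SCochain I M A n) (σ : SSimplex I M n) :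
    SCochain.map f n c σ = f (c σ) := rfl

lemma scd_map (f : A →+ B) {n : ℕ} (c : SCochain I M A n) :
    scd I M B n (SCochain.map f n c) = SCochain.map f (n + 1) (scd I M A n c) := by
  funext σ
  simp only [scd_apply, SCochain.map_apply, map_sum, map_zsmul]

lemma SCochain.map_injective {f : A →+ B} (hf : Function.Injective f) (n : ℕ) :
    Function.Injective (SCochain.map (I := I) (M := M) f n) :=
  fun _ _ h => funext fun σ => hf (congrFun h σ)

lemma SCochain.map_surjective {f : A →+ B} (hf : Function.Surjective f) (n : ℕ) :
    Function.Surjective (SCochain.map (I := I) (M := M) f n) :=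
  fun c => ⟨fun σ => Function.surjInv hf (c σ), funext fun σ => Function.surjInv_eq hf (c σ)⟩

lemma SCochain.map_exact {f : A →+ B} {g : B →+ C} (hfg : Function.Exact f g) (n : ℕ) :
    Function.Exact (SCochain.map (I := I) (M := M) f n) (SCochain.map g n) := by
  intro c
  constructor
  · intro hc
    choose a ha using fun σ => (hfg (c σ)).mp (congrFun hc σ)
    exact ⟨a, funext ha⟩
  · rintro ⟨a, rfl⟩
    exact funext fun σ => hfg.apply_apply_eq_zero (a σ)

lemma pairC_of {n : ℕ} (c : SCochain I M A n) (σ : SSimplex I M n) :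
    pairC I M A c (FreeAbelianGroup.of σ) = c σ :=
  FreeAbelianGroup.lift_apply_of _ _

lemma pairC_map (f : A →+ B) {n : ℕ} (c : SCochain I M A n) (x : SChain I M n) :
    pairC I M B (SCochain.map f n c) x = f (pairC I M A c x) :=
  FreeAbelianGroup.lift_comp_apply x c f

lemma sbd_of {n : ℕ} (σ : SSimplex I M (n + 1)) :
    sbd I M n (FreeAbelianGroup.of σ) =
      ∑ i : Fin (n + 2), (-1 : ℤ) ^ (i : ℕ) • FreeAbelianGroup.of (σ.face i) := by
  show (∑ i : Fin (n + 2),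
      (-1 : ℤ) ^ (i : ℕ) • FreeAbelianGroup.map (fun σ : SSimplex I M (n + 1) => σ.face i))
      (FreeAbelianGroup.of σ) = _
  simp [FreeAbelianGroup.map_of_apply]

@[ext]
lemma SChain.hom_ext {n : ℕ} {F G : SChain I M n →+ A}
    (h : ∀ σ, F (FreeAbelianGroup.of σ) = G (FreeAbelianGroup.of σ)) : F = G :=
  FreeAbelianGroup.lift_ext F G h

lemma pairC_scd {n : ℕ} (c : SCochain I M A n) :
    pairC I M A (scd I M A n c) = (pairC I M A c).comp (sbd I M n) := by
  ext σ
  calc pairC I M A (scd I M A n c) (FreeAbelianGroup.of σ)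
      = ∑ i : Fin (n + 2),
          (-1 : ℤ) ^ (i : ℕ) • pairC I M A c (FreeAbelianGroup.of (σ.face i)) := by
        simp only [pairC_of, scd_apply]
    _ = pairC I M A c (sbd I M n (FreeAbelianGroup.of σ)) := by
        rw [sbd_of]
        exact ((map_sum (pairC I M A c) _ _).trans
          (Finset.sum_congr rfl fun i _ => map_zsmul _ _ _)).symm

end Coefficients

local notation "𝕋" => AddCircle (1 : ℝ)

lemma exact_intCast_mk_zmultiples_one :
    Function.Exact (Int.castAddHom ℝ)
      (QuotientAddGroup.mk' (AddSubgroup.zmultiples (1 : ℝ))) := by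
  intro x
  simp [QuotientAddGroup.eq_zero_iff, AddSubgroup.mem_zmultiples_iff]

section Circle

variable {I M}

def toCircle (n : ℕ) : SCochain I M ℝ n →+ SCochain I M 𝕋 n :=
  SCochain.map (QuotientAddGroup.mk' (AddSubgroup.zmultiples 1)) n

lemma toCircle_surjective (n : ℕ) : Function.Surjective (toCircle (I := I) (M := M) n) :=
  SCochain.map_surjective (QuotientAddGroup.mk'_surjective _) n

lemma exact_intToReal_toCircle (n : ℕ) :
    Function.Exact (intToReal I M n) (toCircle n) :=
  SCochain.map_exact exact_intCast_mk_zmultiples_one n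

lemma intToReal_injective (n : ℕ) : Function.Injective (intToReal I M n) :=
  SCochain.map_injective (f := Int.castAddHom ℝ) Int.cast_injective n

lemma scd_toCircle {n : ℕ} (c : SCochain I M ℝ n) :
    scd I M 𝕋 n (toCircle n c) = toCircle (n + 1) (scd I M ℝ n c) :=
  scd_map _ c

lemma scd_intToReal {n : ℕ} (c : SCochain I M ℤ n) :
    scd I M ℝ n (intToReal I M n c) = intToReal I M (n + 1) (scd I M ℤ n c) :=
  scd_map (Int.castAddHom ℝ) c

lemma pairC_intToReal {n : ℕ} (c : SCochain I M ℤ n) (x : SChain I M n) :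
    pairC I M ℝ (intToReal I M n c) x = pairC I M ℤ c x :=
  pairC_map (Int.castAddHom ℝ) c x

lemma pairC_toCircle {n : ℕ} (c : SCochain I M ℝ n) (x : SChain I M n) :
    pairC I M 𝕋 (toCircle n c) x = pairC I M ℝ c x :=
  pairC_map _ c x

lemma exists_scd_eq_of_pairC_cycle_eq_zero {Q : Type} [AddCommGroup Q] [DivisibleBy Q ℤ]
    {n : ℕ}
    (φ : SCochain I M Q (n + 1)) (hφ : ∀ S, sbd I M n S = 0 → pairC I M Q φ S = 0) :
    ∃ k : SCochain I M Q n, scd I M Q n k = φ := by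
  obtain ⟨K, hK⟩ := (sbd I M n).exists_comp_eq_of_ker_le (pairC I M Q φ) hφ
  obtain ⟨k, hk⟩ : ∃ k : SCochain I M Q n, pairC I M Q k = K :=
    ⟨fun σ => K (FreeAbelianGroup.of σ), SChain.hom_ext fun σ => pairC_of _ σ⟩
  refine ⟨k, funext fun σ => ?_⟩
  rw [← pairC_of (scd I M Q n k), pairC_scd, hk, hK, pairC_of]

end Circle

section Cohomology

variable {A B C X : Type*} [AddCommGroup A] [AddCommGroup B] [AddCommGroup C] [AddCommGroup X]
  {f : A →+ B} {g : B →+ C}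

lemma exists_HqMk_eq (q : Hq f g) : ∃ b hb, HqMk f g b hb = q := by
  obtain ⟨⟨b, hb⟩, rfl⟩ := QuotientAddGroup.mk_surjective q
  exact ⟨b, hb, rfl⟩

lemma HqMk_eq_zero_iff {b : B} (hb : b ∈ g.ker) : HqMk f g b hb = 0 ↔ b ∈ f.range :=
  (QuotientAddGroup.eq_zero_iff _).trans AddSubgroup.mem_addSubgroupOf

lemma HqMk_add {b b' : B} (hb : b ∈ g.ker) (hb' : b' ∈ g.ker) :
    HqMk f g (b + b') (add_mem hb hb') = HqMk f g b hb + HqMk f g b' hb' := rfl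

lemma HqMk_sub {b b' : B} (hb : b ∈ g.ker) (hb' : b' ∈ g.ker) :
    HqMk f g (b - b') (sub_mem hb hb') = HqMk f g b hb - HqMk f g b' hb' := rfl

def Hq.lift (φ : g.ker →+ X) (hφ : ∀ b hb, b ∈ f.range → φ ⟨b, hb⟩ = 0) : Hq f g →+ X :=
  QuotientAddGroup.lift _ φ fun u hu => hφ u.1 u.2 (AddSubgroup.mem_addSubgroupOf.mp hu)

end Cohomology

section CheegerSimons

variable {I M Ω}

def DCgrp.flat (Ω : ∀ n : ℕ, AddSubgroup (SCochain I M ℝ n)) {s n : ℕ} (c : SCochain I M ℤ n)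
    (h : hCompT I M n) : DCgrp I M Ω s n :=
  ⟨(c, h, 0), (Ω n).zero_mem, fun _ => rfl⟩

-- Typed as an `n`-cochain rather than as `hCompT I M (n + 1)`, so that lemmas about `scd` rewrite.
def DCgrp.h {s n : ℕ} (x : DCgrp I M Ω s (n + 1)) : SCochain I M ℝ n := x.1.2.1

variable (hΩ : ∀ n x, x ∈ Ω n → scd I M ℝ n x ∈ Ω (n + 1))

lemma mem_ker_dDC_iff {s n : ℕ} (x : DCgrp I M Ω s (n + 1)) :
    x ∈ (dDC I M Ω hΩ s (n + 1)).ker ↔ scd I M ℤ (n + 1) x.1.1 = 0 ∧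
      x.1.2.2 = intToReal I M (n + 1) x.1.1 + scd I M ℝ n (DCgrp.h x) ∧
      scd I M ℝ (n + 1) x.1.2.2 = 0 := by
  rw [AddMonoidHom.mem_ker, ← Subtype.val_inj]
  show ((scd I M ℤ (n + 1) x.1.1, x.1.2.2 - intToReal I M (n + 1) x.1.1 - scd I M ℝ n x.1.2.1,
      scd I M ℝ (n + 1) x.1.2.2) : SCochain I M ℤ (n + 2) × SCochain I M ℝ (n + 1) ×
        SCochain I M ℝ (n + 2)) = 0 ↔ _
  simp only [Prod.mk_eq_zero, sub_sub, sub_eq_zero]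
  rfl

lemma mem_ker_dDC_iff_of_flat {s n : ℕ} (x : DCgrp I M Ω s (n + 1)) (hω : x.1.2.2 = 0) :
    x ∈ (dDC I M Ω hΩ s (n + 1)).ker ↔
      intToReal I M (n + 1) x.1.1 = -scd I M ℝ n (DCgrp.h x) := by
  rw [mem_ker_dDC_iff, hω, map_zero, eq_comm (a := (0 : SCochain I M ℝ (n + 1))),
    add_eq_zero_iff_eq_neg]
  refine ⟨fun h => h.2.1, fun h => ⟨intToReal_injective _ ?_, h, rfl⟩⟩
  rw [← scd_intToReal, h, map_neg, scd_scd, neg_zero, map_zero]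

lemma HqMk_eq_zero_iff_of_flat (x : DCgrp I M Ω 2 2) (hx : x ∈ (dDC I M Ω hΩ 2 2).ker)
    (hω : x.1.2.2 = 0) :
    HqMk (dDC I M Ω hΩ 2 1) _ x hx = 0 ↔ toCircle 1 (DCgrp.h x) ∈ (scd I M 𝕋 0).range := by
  have hc := (mem_ker_dDC_iff_of_flat hΩ x hω).mp hx
  rw [HqMk_eq_zero_iff]
  constructor
  · rintro ⟨u, rfl⟩
    have hu : u.1.2.2 = 0 := u.2.2 one_lt_two
    refine ⟨-toCircle 0 (DCgrp.h u), ?_⟩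
    show scd I M 𝕋 0 (-toCircle 0 (DCgrp.h u)) =
      toCircle 1 (u.1.2.2 - intToReal I M 1 u.1.1 - scd I M ℝ 0 (DCgrp.h u))
    rw [hu, map_neg, scd_toCircle, map_sub, map_sub,
      (exact_intToReal_toCircle 1).apply_apply_eq_zero, map_zero]
    abel
  · rintro ⟨g, hg⟩
    obtain ⟨g', rfl⟩ := toCircle_surjective 0 g
    obtain ⟨a, ha⟩ := (exact_intToReal_toCircle 1 (DCgrp.h x - scd I M ℝ 0 g')).mp
      (by rw [map_sub, ← scd_toCircle, hg, sub_self])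
    refine ⟨DCgrp.flat Ω (-a) (-g'), Subtype.ext (Prod.ext ?_ (Prod.ext ?_ ?_))⟩
    · show scd I M ℤ 1 (-a) = x.1.1
      apply intToReal_injective
      rw [← scd_intToReal, map_neg, ha, map_neg, map_sub, scd_scd, sub_zero, hc]
    · show 0 - intToReal I M 1 (-a) - scd I M ℝ 0 (-g') = DCgrp.h x
      rw [map_neg, map_neg, ha]
      abel
    · show scd I M ℝ 1 0 = x.1.2.2
      rw [map_zero, hω]

lemma exists_flat_cocycle {k : SCochain I M 𝕋 1} (hk : scd I M 𝕋 1 k = 0) :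
    ∃ x : DCgrp I M Ω 2 2,
      x ∈ (dDC I M Ω hΩ 2 2).ker ∧ x.1.2.2 = 0 ∧ toCircle 1 (DCgrp.h x) = k := by
  obtain ⟨h, rfl⟩ := toCircle_surjective 1 k
  obtain ⟨c, hc⟩ := (exact_intToReal_toCircle 2 (-scd I M ℝ 1 h)).mp
    (by rw [map_neg, ← scd_toCircle, hk, neg_zero])
  exact ⟨DCgrp.flat Ω c h, (mem_ker_dDC_iff_of_flat hΩ _ rfl).mpr hc, rfl, rfl⟩

lemma HqMk_eq_of_flat {x y : DCgrp I M Ω 2 2} (hx : x ∈ (dDC I M Ω hΩ 2 2).ker)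
    (hy : y ∈ (dDC I M Ω hΩ 2 2).ker) (hxω : x.1.2.2 = 0) (hyω : y.1.2.2 = 0)
    (hxy : toCircle 1 (DCgrp.h x) = toCircle 1 (DCgrp.h y)) :
    HqMk (dDC I M Ω hΩ 2 1) _ x hx = HqMk _ _ y hy := by
  rw [← sub_eq_zero, ← HqMk_sub, HqMk_eq_zero_iff_of_flat hΩ _ _ (by simp [hxω, hyω])]
  refine ⟨0, ?_⟩
  rw [map_zero, DCgrp.h, ← sub_eq_zero.mpr hxy, ← map_sub]
  rfl

noncomputable def flatLift (k : (scd I M 𝕋 1).ker) : DCgrp I M Ω 2 2 :=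
  (exists_flat_cocycle hΩ k.2).choose

lemma flatLift_mem_ker (k : (scd I M 𝕋 1).ker) : flatLift hΩ k ∈ (dDC I M Ω hΩ 2 2).ker :=
  (exists_flat_cocycle hΩ k.2).choose_spec.1

lemma flatLift_form_eq_zero (k : (scd I M 𝕋 1).ker) : (flatLift hΩ k).1.2.2 = 0 :=
  (exists_flat_cocycle hΩ k.2).choose_spec.2.1

lemma toCircle_flatLift (k : (scd I M 𝕋 1).ker) : toCircle 1 (DCgrp.h (flatLift hΩ k)) = k :=
  (exists_flat_cocycle hΩ k.2).choose_spec.2.2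

noncomputable def iotaH :
    Hq (scd I M 𝕋 0) (scd I M 𝕋 1) →+ Hq (dDC I M Ω hΩ 2 1) (dDC I M Ω hΩ 2 2) :=
  Hq.lift
    (AddMonoidHom.mk' (fun k => HqMk _ _ (flatLift hΩ k) (flatLift_mem_ker hΩ k)) fun k k' => by
      rw [← HqMk_add]
      refine HqMk_eq_of_flat hΩ _ _ (flatLift_form_eq_zero hΩ _) ?_ ?_
      · simp only [AddSubgroup.coe_add, Prod.snd_add, flatLift_form_eq_zero, add_zero]
      · show _ = toCircle 1 (DCgrp.h (flatLift hΩ k) + DCgrp.h (flatLift hΩ k'))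
        rw [map_add, toCircle_flatLift, toCircle_flatLift, toCircle_flatLift]
        rfl)
    fun k hk hrange => (HqMk_eq_zero_iff_of_flat hΩ _ _ (flatLift_form_eq_zero hΩ _)).mpr
      ((toCircle_flatLift hΩ ⟨k, hk⟩).symm ▸ hrange)

lemma iotaH_HqMk {k : SCochain I M 𝕋 1} (hk : k ∈ (scd I M 𝕋 1).ker) {x : DCgrp I M Ω 2 2}
    (hx : x ∈ (dDC I M Ω hΩ 2 2).ker) (hω : x.1.2.2 = 0) (hxk : toCircle 1 (DCgrp.h x) = k) :
    iotaH hΩ (HqMk _ _ k hk) = HqMk _ _ x hx :=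
  HqMk_eq_of_flat hΩ _ _ (flatLift_form_eq_zero hΩ _) hω (by rw [toCircle_flatLift, hxk])

lemma iotaH_injective : Function.Injective (iotaH hΩ) := by
  rw [injective_iff_map_eq_zero]
  intro q hq
  obtain ⟨k, hk, rfl⟩ := exists_HqMk_eq q
  rw [iotaH_HqMk hΩ hk (flatLift_mem_ker hΩ ⟨k, hk⟩) (flatLift_form_eq_zero hΩ _)
      (toCircle_flatLift hΩ _), HqMk_eq_zero_iff_of_flat hΩ _ _ (flatLift_form_eq_zero hΩ _),
    toCircle_flatLift] at hq
  exact (HqMk_eq_zero_iff hk).mpr hq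

lemma mem_OmegaZcl_of_mem_ker {x : DCgrp I M Ω 2 2} (hx : x ∈ (dDC I M Ω hΩ 2 2).ker) :
    x.1.2.2 ∈ OmegaZcl I M Ω := by
  obtain ⟨-, hω, hclosed⟩ := (mem_ker_dDC_iff hΩ x).mp hx
  refine ⟨x.2.1, hclosed, fun S hS => ⟨pairC I M ℤ x.1.1 S, ?_⟩⟩
  rw [hω, pairC_add, pairC_intToReal, pairC_scd, AddMonoidHom.comp_apply, hS, map_zero, add_zero]

noncomputable def etaH : Hq (dDC I M Ω hΩ 2 1) (dDC I M Ω hΩ 2 2) →+ OmegaZcl I M Ω :=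
  Hq.lift
    (AddMonoidHom.mk' (fun x => ⟨x.1.1.2.2, mem_OmegaZcl_of_mem_ker hΩ x.2⟩) fun _ _ => rfl)
    (by
      rintro _ _ ⟨u, rfl⟩
      refine Subtype.ext ?_
      show scd I M ℝ 1 u.1.2.2 = 0
      rw [u.2.2 one_lt_two, map_zero])

lemma etaH_HqMk {x : DCgrp I M Ω 2 2} (hx : x ∈ (dDC I M Ω hΩ 2 2).ker) :
    etaH hΩ (HqMk _ _ x hx) = ⟨x.1.2.2, mem_OmegaZcl_of_mem_ker hΩ hx⟩ := rfl

lemma etaH_eq_zero_iff (q : Hq (dDC I M Ω hΩ 2 1) (dDC I M Ω hΩ 2 2)) :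
    etaH hΩ q = 0 ↔ q ∈ (iotaH hΩ).range := by
  obtain ⟨x, hx, rfl⟩ := exists_HqMk_eq q
  constructor
  · intro hq
    have hω : x.1.2.2 = 0 := congrArg Subtype.val hq
    have hk : toCircle 1 (DCgrp.h x) ∈ (scd I M 𝕋 1).ker := by
      rw [AddMonoidHom.mem_ker, scd_toCircle, ← neg_eq_zero, ← map_neg,
        ← (mem_ker_dDC_iff_of_flat hΩ x hω).mp hx]
      exact (exact_intToReal_toCircle 2).apply_apply_eq_zero _
    exact ⟨HqMk _ _ _ hk, iotaH_HqMk hΩ hk hx hω rfl⟩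
  · rintro ⟨p, hp⟩
    obtain ⟨k, hk, rfl⟩ := exists_HqMk_eq p
    rw [← hp, iotaH_HqMk hΩ hk (flatLift_mem_ker hΩ ⟨k, hk⟩) (flatLift_form_eq_zero hΩ _)
      (toCircle_flatLift hΩ _)]
    exact Subtype.ext (flatLift_form_eq_zero hΩ _)

lemma etaH_surjective : Function.Surjective (etaH hΩ) := by
  rintro ⟨ω, hω, hclosed, hperiods⟩
  obtain ⟨k, hk⟩ := exists_scd_eq_of_pairC_cycle_eq_zero (toCircle 2 ω) fun S hS => by
    obtain ⟨z, hz⟩ := hperiods S hS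
    rw [pairC_toCircle, hz]
    exact exact_intCast_mk_zmultiples_one.apply_apply_eq_zero z
  obtain ⟨h, rfl⟩ := toCircle_surjective 1 k
  obtain ⟨c, hc⟩ := (exact_intToReal_toCircle 2 (ω - scd I M ℝ 1 h)).mp
    (by rw [map_sub, ← scd_toCircle, hk, sub_self])
  let x : DCgrp I M Ω 2 2 := ⟨(c, h, ω), hω, fun hlt => absurd hlt (lt_irrefl 2)⟩
  have hx : x ∈ (dDC I M Ω hΩ 2 2).ker := by
    refine (mem_ker_dDC_iff hΩ x).mpr ⟨intToReal_injective _ ?_, ?_, hclosed⟩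
    · rw [← scd_intToReal, hc, map_sub, hclosed, scd_scd, sub_zero, map_zero]
    · show ω = intToReal I M 2 c + scd I M ℝ 1 h
      rw [hc, sub_add_cancel]
  exact ⟨HqMk _ _ x hx, rfl⟩

end CheegerSimons

theorem stmt15
    (hΩ : ∀ n x, x ∈ Ω n → scd I M ℝ n x ∈ Ω (n + 1)) :
    ∃ (ι : Hq (scd I M (AddCircle (1 : ℝ)) 0) (scd I M (AddCircle (1 : ℝ)) 1) →+
            Hq (dDC I M Ω hΩ 2 1) (dDC I M Ω hΩ 2 2))
      (η : Hq (dDC I M Ω hΩ 2 1) (dDC I M Ω hΩ 2 2) →+ OmegaZcl I M Ω),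
      Function.Injective ι ∧
      Function.Surjective η ∧
      (∀ x, η x = 0 ↔ x ∈ ι.range) ∧
      -- `η` sends the class of `(c, h, ω)` to `ω`:
      (∀ (x : DCgrp I M Ω 2 2) (hx : x ∈ (dDC I M Ω hΩ 2 2).ker)
        (hmem : x.1.2.2 ∈ OmegaZcl I M Ω),
        η (HqMk _ _ x hx) = ⟨x.1.2.2, hmem⟩) ∧
      -- `ι` sends the class of `h mod ℤ` to the class of `(c, h, 0)`:
      (∀ (x : DCgrp I M Ω 2 2) (hx : x ∈ (dDC I M Ω hΩ 2 2).ker),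
        x.1.2.2 = 0 →
        ∀ hker : (fun σ => (((x.1.2.1 : SCochain I M ℝ 1) σ : ℝ) : AddCircle (1 : ℝ)) :
            SCochain I M (AddCircle (1 : ℝ)) 1) ∈ (scd I M (AddCircle (1 : ℝ)) 1).ker,
          ι (HqMk _ _ _ hker) = HqMk _ _ x hx) :=
  ⟨iotaH hΩ, etaH hΩ, iotaH_injective hΩ, etaH_surjective hΩ, etaH_eq_zero_iff hΩ,
    fun _ hx _ => etaH_HqMk hΩ hx, fun _ hx hω hker => iotaH_HqMk hΩ hker hx hω rfl⟩

end Stmt15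

end
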